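/- arXiv:1408.1964 — 2 statements merged into one kernel-verified Lean document; each statement's English description precedes it below -/
import Mathlib

section
/- Let G be a graph with a dominating induced path P = p_1,...,p_m, and suppose G has no induced cycle of length at least k. Let I consist of k consecutive vertices of P. Define the left of I as the set of vertices of G outside P all of whose neighbors on P lie strictly left of I, and the right of I symmetrically. Then there is no edge of G between a vertex in the left of I and a vertex in the right of I. -/
/-!
Let `p a` be the last neighbour of `u` on the path and `p b` the first neighbour of `v`, so that
`a < i` and `i + k ≤ b`. If `u` and `v` were adjacent, `p a, …, p b, v, u` would be an induced
cycle of length `b - a + 3 > k`.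
-/

namespace SimpleGraph

variable {V : Type*} {G : SimpleGraph V}

theorem cycleGraph_adj_iff_val {n : ℕ} {x y : Fin (n + 2)} :
    (cycleGraph (n + 2)).Adj x y ↔
      (x : ℕ) + 1 = y ∨ (y : ℕ) + 1 = x ∨ ((x : ℕ) = n + 1 ∧ (y : ℕ) = 0) ∨
        ((y : ℕ) = n + 1 ∧ (x : ℕ) = 0) := by
  have key : ∀ c < 2 * (n + 2), c % (n + 2) = 1 ↔ c = 1 ∨ c = n + 3 := by
    intro c hc
    rcases Nat.lt_or_ge c (n + 2) with h | h
    · rw [Nat.mod_eq_of_lt h]; omega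
    · rw [Nat.mod_eq_sub_mod h, Nat.mod_eq_of_lt (by omega)]; omega
  rw [cycleGraph_adj', Fin.sub_def, Fin.sub_def]
  simp only
  rw [key _ (by omega), key _ (by omega)]
  omega

def pathGraph.segmentEmbedding {m : ℕ} (a n : ℕ) (h : a + n ≤ m) :
    pathGraph n ↪g pathGraph m where
  toFun j := ⟨a + j, by omega⟩
  inj' i j hij := by simpa [Fin.ext_iff] using hij
  map_rel_iff' {i j} := by
    change (pathGraph m).Adj ⟨a + i, _⟩ ⟨a + j, _⟩ ↔ _
    simp only [pathGraph_adj]; omega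

theorem nonempty_cycleGraph_embedding_of_pathGraph_embedding {n : ℕ} (q : pathGraph n ↪g G)
    {u v : V} (hu : ∀ j, u ≠ q j) (hv : ∀ j, v ≠ q j)
    (huq : ∀ j, G.Adj u (q j) ↔ (j : ℕ) = 0) (hvq : ∀ j, G.Adj v (q j) ↔ (j : ℕ) + 1 = n)
    (huv : G.Adj u v) :
    Nonempty (cycleGraph (n + 2) ↪g G) := by
  -- the cycle `q 0, …, q (n - 1), v, u`
  let f : Fin (n + 2) → V := Fin.append q ![v, u]
  have hinj : Function.Injective f := by
    intro x y
    induction x using Fin.addCases with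
    | left i => induction y using Fin.addCases with
      | left j => simp [f]
      | right j => fin_cases j <;> simp [f, (hu _).symm, (hv _).symm]
    | right i => induction y using Fin.addCases with
      | left j => fin_cases i <;> simp [f, hu, hv]
      | right j => fin_cases i <;> fin_cases j <;> simp [f, huv.ne, huv.ne.symm]
  refine ⟨⟨⟨f, hinj⟩, fun {x y} => ?_⟩⟩
  change G.Adj (f x) (f y) ↔ _
  rw [cycleGraph_adj_iff_val]
  induction x using Fin.addCases with
  | left i => induction y using Fin.addCases with
    | left j => simp [f, pathGraph_adj]; omega
    | right j =>
      fin_cases j <;> simp [f, G.adj_comm (q i) v, G.adj_comm (q i) u, huq, hvq] <;> omega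
  | right i => induction y using Fin.addCases with
    | left j => fin_cases i <;> simp [f, huq, hvq] <;> omega
    | right j => fin_cases i <;> fin_cases j <;> simp [f, huv, huv.symm]

theorem nonempty_cycleGraph_embedding_of_adj_of_le {m : ℕ} (p : pathGraph m ↪g G) {u v : V}
    (hu : ∀ j, u ≠ p j) (hv : ∀ j, v ≠ p j) {a b : Fin m} (hab : a ≤ b)
    (hua : G.Adj u (p a)) (hua_max : ∀ j, G.Adj u (p j) → j ≤ a)
    (hvb : G.Adj v (p b)) (hvb_min : ∀ j, G.Adj v (p j) → b ≤ j) (huv : G.Adj u v) :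
    Nonempty (cycleGraph (b - a + 3) ↪g G) := by
  let q := (pathGraph.segmentEmbedding a (b - a + 1) (by omega)).trans p
  have hq (j : Fin (b - a + 1)) : q j = p ⟨a + j, by omega⟩ := rfl
  refine nonempty_cycleGraph_embedding_of_pathGraph_embedding q (fun j => hu _) (fun j => hv _)
    (fun j => ⟨fun h => ?_, fun h => ?_⟩) (fun j => ⟨fun h => ?_, fun h => ?_⟩) huv
  · rw [hq] at h
    have := Fin.le_def.1 (hua_max _ h)
    dsimp only at this
    omega
  · rwa [hq, show (⟨a + j, _⟩ : Fin m) = a from Fin.ext (by simp [h])]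
  · rw [hq] at h
    have := Fin.le_def.1 (hvb_min _ h)
    dsimp only at this
    omega
  · rwa [hq, show (⟨a + j, _⟩ : Fin m) = b from Fin.ext (by dsimp only; omega)]

end SimpleGraph

theorem stmt4_general {V : Type*} (G : SimpleGraph V) (k m : ℕ)
    (hhole : ∀ l, k ≤ l → IsEmpty (SimpleGraph.cycleGraph l ↪g G))
    (p : SimpleGraph.pathGraph m ↪g G)
    (hdom : ∀ v : V, ∃ j : Fin m, v = p j ∨ G.Adj v (p j))
    (i : ℕ)
    (u v : V)
    (hu : (∀ j : Fin m, u ≠ p j) ∧ ∀ j : Fin m, G.Adj u (p j) → (j : ℕ) < i)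
    (hv : (∀ j : Fin m, v ≠ p j) ∧ ∀ j : Fin m, G.Adj v (p j) → i + k ≤ (j : ℕ)) :
    ¬ G.Adj u v := by
  intro huv
  have exists_adj (w : V) (hw : ∀ j, w ≠ p j) : {j | G.Adj w (p j)}.Nonempty := by
    obtain ⟨j, hj | hj⟩ := hdom w
    exacts [(hw j hj).elim, ⟨j, hj⟩]
  obtain ⟨a, hua, hua_max⟩ := Set.exists_max_image _ id (Set.toFinite _) (exists_adj u hu.1)
  obtain ⟨b, hvb, hvb_min⟩ := Set.exists_min_image _ id (Set.toFinite _) (exists_adj v hv.1)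
  have hai := hu.2 a hua
  have hbk := hv.2 b hvb
  obtain ⟨e⟩ := SimpleGraph.nonempty_cycleGraph_embedding_of_adj_of_le p hu.1 hv.1
    (by omega) hua hua_max hvb hvb_min huv
  exact (hhole _ (by omega)).false e

/-- With a dominating induced path `p : pathGraph m ↪g G` in a graph
with no induced cycle of length at least `k`, and `I = {p i, …, p (i+k-1)}`, there is
no edge between a vertex in the left of `I` (a vertex outside `P` all of whose
neighbours on `P` are strictly left of `I`) and a vertex in the right of `I`. -/
theorem stmt4 {V : Type*} (G : SimpleGraph V) (k m : ℕ)
    (hhole : ∀ l, k ≤ l → IsEmpty (SimpleGraph.cycleGraph l ↪g G))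
    (p : SimpleGraph.pathGraph m ↪g G)
    (hdom : ∀ v : V, ∃ j : Fin m, v = p j ∨ G.Adj v (p j))
    (i : ℕ) (hik : i + k ≤ m)
    (u v : V)
    (hu : (∀ j : Fin m, u ≠ p j) ∧ ∀ j : Fin m, G.Adj u (p j) → (j : ℕ) < i)
    (hv : (∀ j : Fin m, v ≠ p j) ∧ ∀ j : Fin m, G.Adj v (p j) → i + k ≤ (j : ℕ)) :
    ¬ G.Adj u v :=
  stmt4_general G k m hhole p hdom i u v hu hv
end

section
/- If a hereditary class C of graphs has the strong Erdős–Hajnal property (there is c > 0 such that every n-vertex graph in C, for n sufficiently large, contains a complete ⌈cn⌉-bipartite pair or an empty ⌈cn⌉-bipartite pair), then C has the Erdős–Hajnal property: there exists c'' > 0 such that every n-vertex graph in C contains a clique or a stable set of size at least n^{c''}. -/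
/-!
Let `c < 1` and `N ≥ 2` be the constant and the threshold of the strong Erdős–Hajnal property
and put `a = log_{1/c} 2`, so that `c ^ a = 1/2`. By induction on `n`, every `n`-vertex graph of
`C` has a clique `A` and a stable set `B` with `|A| |B| ≥ (n / N) ^ a`: split off a homogeneous
pair `X`, `Y` of size at least `c n` and apply induction inside `X` and inside `Y`. If `X` is
complete to `Y`, the union of the two cliques together with the larger stable set has product at
least the sum of the two products, which is at least `2 (c n / N) ^ a = (n / N) ^ a`; the
anticomplete case is symmetric. The larger of `A` and `B` then has size at least
`(n / N) ^ (a / 2) ≥ n ^ (a / 4)` once `n ≥ N²`, and a graph on fewer vertices still has a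
homogeneous set of size `min n 2`.
-/

open Finset Real

namespace Real

theorem rpow_logb_inv_le_add {c x y z : ℝ} (hc₀ : 0 < c) (hc₁ : c < 1) (hx : 0 ≤ x)
    (hy : c * x ≤ y) (hz : c * x ≤ z) :
    x ^ logb c⁻¹ 2 ≤ y ^ logb c⁻¹ 2 + z ^ logb c⁻¹ 2 := by
  have ha : 0 < logb c⁻¹ 2 := logb_pos ((one_lt_inv₀ hc₀).2 hc₁) one_lt_two
  have hca : c ^ logb c⁻¹ 2 = 2⁻¹ := by
    rw [← inv_inv c, inv_rpow (by positivity), inv_inv,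
      rpow_logb (by positivity) (by simp [hc₁.ne]) two_pos]
  calc x ^ logb c⁻¹ 2 = (c * x) ^ logb c⁻¹ 2 + (c * x) ^ logb c⁻¹ 2 := by
        rw [mul_rpow hc₀.le hx, hca]
        ring
    _ ≤ y ^ logb c⁻¹ 2 + z ^ logb c⁻¹ 2 := by gcongr

theorem natCast_rpow_le_min_two {M e : ℝ} (hM : 1 < M) (he₀ : 0 < e) (he : e ≤ logb M 2)
    {n : ℕ} (hn : (n : ℝ) ≤ M) : (n : ℝ) ^ e ≤ (min n 2 : ℕ) := by
  rcases Nat.lt_or_ge n 2 with hn2 | hn2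
  · interval_cases n <;> simp [zero_rpow he₀.ne']
  calc (n : ℝ) ^ e ≤ M ^ e := by gcongr
    _ ≤ M ^ logb M 2 := rpow_le_rpow_of_exponent_le hM.le he
    _ = (min n 2 : ℕ) := by
        rw [rpow_logb (by positivity) hM.ne' two_pos, min_eq_right hn2, Nat.cast_ofNat]

theorem rpow_div_four_le_div_rpow_div_two {a x N : ℝ} (ha : 0 ≤ a) (hN : 0 < N)
    (hx : N ^ 2 ≤ x) : x ^ (a / 4) ≤ (x / N) ^ (a / 2) := by
  have hx₀ : 0 ≤ x := (sq_nonneg N).trans hx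
  have hsq : x ≤ (x / N) ^ 2 := by
    rw [div_pow, le_div_iff₀ (by positivity), sq x]
    exact mul_le_mul_of_nonneg_left hx hx₀
  calc x ^ (a / 4) ≤ ((x / N) ^ 2) ^ (a / 4) := by gcongr
    _ = (x / N) ^ (a / 2) := by
        rw [← rpow_natCast, ← rpow_mul (by positivity)]
        ring_nf

theorem rpow_div_two_le_max_of_rpow_le_mul {a x p q : ℝ} (hx : 0 ≤ x) (hp : 0 ≤ p)
    (hq : 0 ≤ q) (h : x ^ a ≤ p * q) : x ^ (a / 2) ≤ max p q := by
  have hsq : (x ^ (a / 2)) ^ 2 = x ^ a := by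
    rw [← rpow_natCast, ← rpow_mul hx]
    ring_nf
  have hpq : p * q ≤ max p q ^ 2 := by
    rw [sq]
    exact mul_le_mul (le_max_left p q) (le_max_right p q) hq (hp.trans (le_max_left p q))
  exact (pow_le_pow_iff_left₀ (by positivity) (by positivity) two_ne_zero).1 (by linarith)

end Real

namespace SimpleGraph

variable {V W : Type*} {G : SimpleGraph V} {H : SimpleGraph W}

theorem IsClique.finsetMap_of_embedding {s : Finset W} (φ : H ↪g G) (hs : H.IsClique s) :
    G.IsClique (s.map φ.toEmbedding) := by
  intro x hx y hy hxy
  simp only [coe_map, Set.mem_image, mem_coe] at hx hy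
  obtain ⟨a, ha, rfl⟩ := hx
  obtain ⟨b, hb, rfl⟩ := hy
  exact φ.map_adj_iff.2 (hs ha hb (ne_of_apply_ne _ hxy))

theorem IsClique.union_of_forall_adj {s t : Set V} (hs : G.IsClique s) (ht : G.IsClique t)
    (hst : ∀ x ∈ s, ∀ y ∈ t, G.Adj x y) : G.IsClique (s ∪ t) :=
  Set.pairwise_union.2 ⟨hs, ht, fun x hx y hy _ => ⟨hst x hx y hy, (hst x hx y hy).symm⟩⟩

theorem isClique_or_isClique_compl_of_card_le_two {s : Finset V} (hs : #s ≤ 2) :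
    G.IsClique s ∨ Gᶜ.IsClique s := by
  by_contra! h
  obtain ⟨hG, hGc⟩ := h
  simp only [IsClique, Set.Pairwise, mem_coe, compl_adj, not_forall, not_and, not_not] at hG hGc
  obtain ⟨x, hx, y, hy, hxy, hnadj⟩ := hG
  obtain ⟨u, hu, v, hv, huv, hadj⟩ := hGc
  have hthree : ∀ a ∈ s, ∀ b ∈ s, ∀ c ∈ s, a = b ∨ a = c ∨ b = c := by
    have := (two_lt_card (s := s)).not.1 (by omega)
    grind
  grind [adj_symm]

theorem exists_isClique_or_isClique_compl_card_eq_min [Fintype V] (G : SimpleGraph V) :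
    ∃ s : Finset V, (G.IsClique s ∨ Gᶜ.IsClique s) ∧ #s = min (Fintype.card V) 2 := by
  obtain ⟨s, -, hs⟩ := exists_subset_card_eq (s := (univ : Finset V))
    (n := min (Fintype.card V) 2) (by simp)
  exact ⟨s, isClique_or_isClique_compl_of_card_le_two (by omega), hs⟩

theorem exists_rpow_le_card_of_rpow_le_mul [Fintype V] (G : SimpleGraph V)
    {A B : Finset V} (hA : G.IsClique A) (hB : Gᶜ.IsClique B) {a e N : ℝ} (hN : 1 < N)
    (he₀ : 0 < e) (hea : e ≤ a / 4) (heN : e ≤ logb (N ^ 2) 2)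
    (hAB : ((Fintype.card V : ℝ) / N) ^ a ≤ #A * #B) :
    ∃ s : Finset V, (G.IsClique s ∨ Gᶜ.IsClique s) ∧ (Fintype.card V : ℝ) ^ e ≤ #s := by
  rcases le_total (Fintype.card V : ℝ) (N ^ 2) with hn | hn
  · obtain ⟨s, hs, hcard⟩ := G.exists_isClique_or_isClique_compl_card_eq_min
    exact ⟨s, hs, hcard ▸ natCast_rpow_le_min_two (by nlinarith) he₀ heN hn⟩
  have hmax : (Fintype.card V : ℝ) ^ e ≤ max (#A : ℝ) #B :=
    calc (Fintype.card V : ℝ) ^ e ≤ (Fintype.card V : ℝ) ^ (a / 4) :=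
          rpow_le_rpow_of_exponent_le (by nlinarith) hea
      _ ≤ ((Fintype.card V : ℝ) / N) ^ (a / 2) :=
          rpow_div_four_le_div_rpow_div_two (by linarith) (by positivity) hn
      _ ≤ max (#A : ℝ) #B :=
          rpow_div_two_le_max_of_rpow_le_mul (by positivity) (by positivity) (by positivity) hAB
  rcases le_total (#A : ℝ) #B with hle | hle
  · exact ⟨B, Or.inr hB, by rwa [max_eq_right hle] at hmax⟩
  · exact ⟨A, Or.inl hA, by rwa [max_eq_left hle] at hmax⟩

def IsHomogeneousPair (G : SimpleGraph V) (X Y : Finset V) : Prop :=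
  Disjoint X Y ∧ ((∀ x ∈ X, ∀ y ∈ Y, G.Adj x y) ∨ (∀ x ∈ X, ∀ y ∈ Y, ¬ G.Adj x y))

section DecidableEq

variable [DecidableEq V]

theorem exists_isClique_isClique_compl_add_mul_le {A₁ A₂ B₁ B₂ : Finset V}
    (hA₁ : G.IsClique A₁) (hA₂ : G.IsClique A₂) (hB₁ : Gᶜ.IsClique B₁) (hB₂ : Gᶜ.IsClique B₂)
    (hA : ∀ x ∈ A₁, ∀ y ∈ A₂, G.Adj x y) :
    ∃ A B : Finset V, G.IsClique A ∧ Gᶜ.IsClique B ∧ #A₁ * #B₁ + #A₂ * #B₂ ≤ #A * #B := by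
  have hclique : G.IsClique (A₁ ∪ A₂ : Finset V) := by
    rw [coe_union]
    exact hA₁.union_of_forall_adj hA₂ hA
  have hcard : #(A₁ ∪ A₂) = #A₁ + #A₂ :=
    card_union_of_disjoint (Finset.disjoint_left.2 fun x hx₁ hx₂ => (hA x hx₁ x hx₂).ne rfl)
  rcases le_total #B₁ #B₂ with hB | hB
  · refine ⟨A₁ ∪ A₂, B₂, hclique, hB₂, ?_⟩
    rw [hcard, add_mul]
    gcongr
  · refine ⟨A₁ ∪ A₂, B₁, hclique, hB₁, ?_⟩
    rw [hcard, add_mul]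
    gcongr

theorem IsHomogeneousPair.exists_isClique_isClique_compl_add_mul_le
    {X Y A₁ A₂ B₁ B₂ : Finset V} (hXY : G.IsHomogeneousPair X Y)
    (hA₁X : A₁ ⊆ X) (hB₁X : B₁ ⊆ X) (hA₂Y : A₂ ⊆ Y) (hB₂Y : B₂ ⊆ Y)
    (hA₁ : G.IsClique A₁) (hA₂ : G.IsClique A₂) (hB₁ : Gᶜ.IsClique B₁) (hB₂ : Gᶜ.IsClique B₂) :
    ∃ A B : Finset V, G.IsClique A ∧ Gᶜ.IsClique B ∧ #A₁ * #B₁ + #A₂ * #B₂ ≤ #A * #B := by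
  obtain ⟨hdisj, hcomplete | hempty⟩ := hXY
  · exact SimpleGraph.exists_isClique_isClique_compl_add_mul_le hA₁ hA₂ hB₁ hB₂
      fun x hx y hy => hcomplete x (hA₁X hx) y (hA₂Y hy)
  · have hA₁' : Gᶜᶜ.IsClique A₁ := by rwa [compl_compl]
    have hA₂' : Gᶜᶜ.IsClique A₂ := by rwa [compl_compl]
    obtain ⟨B, A, hB, hA, hle⟩ :=
      SimpleGraph.exists_isClique_isClique_compl_add_mul_le hB₁ hB₂ hA₁' hA₂' fun x hx y hy =>
        (compl_adj G x y).2
          ⟨ne_of_mem_of_not_mem (hB₁X hx) (Finset.disjoint_right.1 hdisj (hB₂Y hy)),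
            hempty x (hB₁X hx) y (hB₂Y hy)⟩
    rw [compl_compl] at hA
    exact ⟨A, B, hA, hB, by simpa only [mul_comm] using hle⟩

end DecidableEq

end SimpleGraph

open SimpleGraph

theorem exists_isClique_isClique_compl_subset_of_hereditary
    {C : ∀ n : ℕ, SimpleGraph (Fin n) → Prop}
    (hher : ∀ (n m : ℕ) (G : SimpleGraph (Fin n)) (H : SimpleGraph (Fin m)),
      C n G → Nonempty (H ↪g G) → C m H)
    {n : ℕ} {G : SimpleGraph (Fin n)} (hG : C n G) (X : Finset (Fin n)) {p : ℝ}
    (hX : ∀ H : SimpleGraph (Fin #X), C #X H →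
      ∃ A B : Finset (Fin #X), H.IsClique A ∧ Hᶜ.IsClique B ∧ p ≤ #A * #B) :
    ∃ A ⊆ X, ∃ B ⊆ X, G.IsClique A ∧ Gᶜ.IsClique B ∧ p ≤ #A * #B := by
  let e := (X.orderEmbOfFin rfl).toEmbedding
  let φ : G.comap e ↪g G := Embedding.comap e G
  obtain ⟨A, B, hA, hB, hp⟩ := hX _ (hher _ _ _ _ hG ⟨φ⟩)
  have hmap_subset (s : Finset (Fin #X)) : s.map e ⊆ X := fun x hx => by
    obtain ⟨i, -, rfl⟩ := mem_map.1 hx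
    exact X.orderEmbOfFin_mem rfl i
  exact ⟨A.map e, hmap_subset A, B.map e, hmap_subset B, hA.finsetMap_of_embedding φ,
    hB.finsetMap_of_embedding (Embedding.complEquiv φ), by simpa using hp⟩

theorem exists_isClique_isClique_compl_rpow_le_mul {C : ∀ n : ℕ, SimpleGraph (Fin n) → Prop}
    (hher : ∀ (n m : ℕ) (G : SimpleGraph (Fin n)) (H : SimpleGraph (Fin m)),
      C n G → Nonempty (H ↪g G) → C m H)
    {c : ℝ} (hc₀ : 0 < c) (hc₁ : c < 1) {N : ℕ} (hN : 0 < N)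
    (hpair : ∀ n ≥ N, ∀ G : SimpleGraph (Fin n), C n G →
      ∃ X Y, G.IsHomogeneousPair X Y ∧ c * n ≤ #X ∧ c * n ≤ #Y)
    (n : ℕ) (G : SimpleGraph (Fin n)) (hG : C n G) :
    ∃ A B : Finset (Fin n), G.IsClique A ∧ Gᶜ.IsClique B ∧
      ((n : ℝ) / N) ^ logb c⁻¹ 2 ≤ #A * #B := by
  have ha : 0 < logb c⁻¹ 2 := logb_pos ((one_lt_inv₀ hc₀).2 hc₁) one_lt_two
  induction n using Nat.strong_induction_on with
  | _ n ih =>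
  rcases lt_or_ge n N with hnN | hnN
  · rcases n.eq_zero_or_pos with rfl | hn
    · exact ⟨∅, ∅, by simp, by simp, by rw [Nat.cast_zero, zero_div, zero_rpow ha.ne']; positivity⟩
    · refine ⟨{⟨0, hn⟩}, {⟨0, hn⟩}, by simp, by simp, ?_⟩
      simp only [card_singleton, Nat.cast_one, mul_one]
      exact rpow_le_one (by positivity) ((div_le_one (by positivity)).2 (by exact_mod_cast hnN.le))
        ha.le
  obtain ⟨X, Y, hXY, hX, hY⟩ := hpair n hnN G hG
  have hpos : (0 : ℝ) < c * n := mul_pos hc₀ (by exact_mod_cast hN.trans_le hnN)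
  have hX_lt : #X < n := by
    obtain ⟨y, hy⟩ : Y.Nonempty := card_pos.1 (by exact_mod_cast hpos.trans_le hY)
    simpa using card_lt_univ_of_notMem (Finset.disjoint_right.1 hXY.1 hy)
  have hY_lt : #Y < n := by
    obtain ⟨x, hx⟩ : X.Nonempty := card_pos.1 (by exact_mod_cast hpos.trans_le hX)
    simpa using card_lt_univ_of_notMem (Finset.disjoint_left.1 hXY.1 hx)
  obtain ⟨A₁, hA₁X, B₁, hB₁X, hA₁, hB₁, h₁⟩ :=
    exists_isClique_isClique_compl_subset_of_hereditary hher hG X (ih _ hX_lt)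
  obtain ⟨A₂, hA₂Y, B₂, hB₂Y, hA₂, hB₂, h₂⟩ :=
    exists_isClique_isClique_compl_subset_of_hereditary hher hG Y (ih _ hY_lt)
  obtain ⟨A, B, hA, hB, hAB⟩ :=
    hXY.exists_isClique_isClique_compl_add_mul_le hA₁X hB₁X hA₂Y hB₂Y hA₁ hA₂ hB₁ hB₂
  refine ⟨A, B, hA, hB, ?_⟩
  calc ((n : ℝ) / N) ^ logb c⁻¹ 2 ≤ ((#X : ℝ) / N) ^ logb c⁻¹ 2 + ((#Y : ℝ) / N) ^ logb c⁻¹ 2 :=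
        rpow_logb_inv_le_add hc₀ hc₁ (by positivity)
          (by rw [← mul_div_assoc]; gcongr) (by rw [← mul_div_assoc]; gcongr)
    _ ≤ #A₁ * #B₁ + #A₂ * #B₂ := add_le_add h₁ h₂
    _ ≤ #A * #B := by exact_mod_cast hAB

/-- If a hereditary class `C` of graphs has the strong Erdős–Hajnal
property (for some `c > 0` and all sufficiently large `n`, every `n`-vertex graph of
`C` has a complete or empty `⌈cn⌉`-bipartite pair), then `C` has the Erdős–Hajnal
property: there is `c'' > 0` such that every `n`-vertex graph of `C` has a clique or a
stable set of size at least `n ^ c''`. -/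
theorem stmt7 (C : ∀ n : ℕ, SimpleGraph (Fin n) → Prop)
    (hher : ∀ (n m : ℕ) (G : SimpleGraph (Fin n)) (H : SimpleGraph (Fin m)),
      C n G → Nonempty (H ↪g G) → C m H)
    (hSEH : ∃ c : ℝ, 0 < c ∧ ∃ N : ℕ, ∀ n ≥ N, ∀ G : SimpleGraph (Fin n), C n G →
      ∃ X Y : Finset (Fin n), Disjoint X Y ∧
        X.card = ⌈c * n⌉₊ ∧ Y.card = ⌈c * n⌉₊ ∧
        ((∀ x ∈ X, ∀ y ∈ Y, G.Adj x y) ∨ (∀ x ∈ X, ∀ y ∈ Y, ¬ G.Adj x y))) :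
    ∃ c'' : ℝ, 0 < c'' ∧ ∀ (n : ℕ) (G : SimpleGraph (Fin n)), C n G →
      ∃ s : Finset (Fin n), (G.IsClique s ∨ Gᶜ.IsClique s) ∧
        (n : ℝ) ^ c'' ≤ (s.card : ℝ) := by
  obtain ⟨c₀, hc₀, N₀, hSEH⟩ := hSEH
  set c := min c₀ (1 / 2)
  set N := max N₀ 2
  have hc : 0 < c := lt_min hc₀ one_half_pos
  have hc₁ : c < 1 := (min_le_right _ _).trans_lt (by norm_num)
  have hN : (1 : ℝ) < N := by exact_mod_cast (le_max_right N₀ 2).trans_lt' one_lt_two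
  have hpair (n : ℕ) (hn : N ≤ n) (G : SimpleGraph (Fin n)) (hG : C n G) :
      ∃ X Y, G.IsHomogeneousPair X Y ∧ c * n ≤ #X ∧ c * n ≤ #Y := by
    obtain ⟨X, Y, hXY, hX, hY, hcase⟩ := hSEH n (le_of_max_le_left hn) G hG
    have hcn : c * n ≤ ⌈c₀ * n⌉₊ :=
      (mul_le_mul_of_nonneg_right (min_le_left _ _) n.cast_nonneg).trans (Nat.le_ceil _)
    exact ⟨X, Y, ⟨hXY, hcase⟩, hX ▸ hcn, hY ▸ hcn⟩
  have ha : 0 < logb c⁻¹ 2 := logb_pos ((one_lt_inv₀ hc).2 hc₁) one_lt_two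
  have hN2 : 1 < (N : ℝ) ^ 2 := one_lt_pow₀ hN two_ne_zero
  set e := min (logb c⁻¹ 2 / 4) (logb (N ^ 2) 2)
  have he : 0 < e := lt_min (div_pos ha four_pos) (logb_pos hN2 one_lt_two)
  refine ⟨e, he, fun n G hG => ?_⟩
  obtain ⟨A, B, hA, hB, hAB⟩ :=
    exists_isClique_isClique_compl_rpow_le_mul hher hc hc₁ (by omega) hpair n G hG
  simpa only [Fintype.card_fin] using G.exists_rpow_le_card_of_rpow_le_mul hA hB hN he
    (min_le_left _ _) (min_le_right _ _) (by simpa only [Fintype.card_fin] using hAB)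
end
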